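/- Let Δ ⊆ ℝ₊² be a Newton diagram of an ideal of finite codimension (so Δ touches both coordinate axes), let m(Δ) be the area of the region delimited by the two axes and the boundary of Δ, and let t be the ordinate of the intersection of the line α = β with the boundary of Δ. Then m(Δ) ≥ 2t², that is, m(Δ) ≥ 2·(1/lct)² where lct = 1/t. Equality holds if and only if the Newton polygon consists of a single face with equation α + β = N (and then t = N/2). -/

import Mathlib

open Pointwise MeasureTheory

/-- The Newton diagram Δ(E) = conv(E + ℝ₊²) of a set E ⊆ ℕ². -/
noncomputable def newtonDiagram (E : Set (ℕ × ℕ)) : Set (ℝ × ℝ) :=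
  convexHull ℝ
    (((fun e : ℕ × ℕ => ((e.1 : ℝ), (e.2 : ℝ))) '' E) +
      {r : ℝ × ℝ | 0 ≤ r.1 ∧ 0 ≤ r.2})

open Set

lemma tri_meas (a b c : ℝ) :
    MeasurableSet {p : ℝ × ℝ | 0 ≤ p.1 ∧ 0 ≤ p.2 ∧ a*p.1 + b*p.2 < c} := by
  apply MeasurableSet.inter
  · exact measurableSet_le measurable_const measurable_fst
  apply MeasurableSet.inter
  · exact measurableSet_le measurable_const measurable_snd
  · exact measurableSet_lt ((measurable_fst.const_mul a).add
      (measurable_snd.const_mul b)) measurable_const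

lemma triangle_volume (a b c : ℝ) (ha : 0 < a) (hb : 0 < b) (hc : 0 ≤ c) :
    volume {p : ℝ × ℝ | 0 ≤ p.1 ∧ 0 ≤ p.2 ∧ a*p.1 + b*p.2 < c}
      = ENNReal.ofReal (c^2/(2*a*b)) := by
  have hmeas : MeasurableSet {p : ℝ × ℝ | 0 ≤ p.1 ∧ 0 ≤ p.2 ∧ a*p.1 + b*p.2 < c} := by
    apply MeasurableSet.inter
    · exact measurableSet_le measurable_const measurable_fst
    apply MeasurableSet.inter
    · exact measurableSet_le measurable_const measurable_snd
    · exact measurableSet_lt ((measurable_fst.const_mul a).add (measurable_snd.const_mul b)) measurable_const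
  rw [Measure.volume_eq_prod ℝ ℝ, Measure.prod_apply hmeas]
  have hslice : ∀ x : ℝ,
      volume (Prod.mk x ⁻¹' {p : ℝ × ℝ | 0 ≤ p.1 ∧ 0 ≤ p.2 ∧ a*p.1 + b*p.2 < c})
        = (Ici (0:ℝ)).indicator (fun x => ENNReal.ofReal ((c - a*x)/b)) x := by
    intro x
    have : Prod.mk x ⁻¹' {p : ℝ × ℝ | 0 ≤ p.1 ∧ 0 ≤ p.2 ∧ a*p.1 + b*p.2 < c}
        = {y | 0 ≤ x ∧ 0 ≤ y ∧ a*x + b*y < c} := rfl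
    rw [this]
    by_cases hx : 0 ≤ x
    · have : {y | 0 ≤ x ∧ 0 ≤ y ∧ a*x + b*y < c} = Ico (0:ℝ) ((c - a*x)/b) := by
        ext y
        simp only [mem_setOf_eq, mem_Ico, hx, true_and]
        constructor
        · rintro ⟨h2, h3⟩
          exact ⟨h2, by rw [lt_div_iff₀ hb]; linarith⟩
        · rintro ⟨h2, h3⟩
          rw [lt_div_iff₀ hb] at h3
          exact ⟨h2, by linarith⟩
      rw [this, Real.volume_Ico, indicator_of_mem (mem_Ici.mpr hx), sub_zero]
    · have : {y | 0 ≤ x ∧ 0 ≤ y ∧ a*x + b*y < c} = (∅ : Set ℝ) := by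
        ext y; simp [hx]
      rw [this, measure_empty, indicator_of_notMem (by simpa using hx)]
  simp only [hslice]
  rw [lintegral_indicator measurableSet_Ici]
  have hsplit : Ici (0:ℝ) = Icc 0 (c/a) ∪ Ioi (c/a) :=
    (Icc_union_Ioi_eq_Ici (div_nonneg hc ha.le)).symm
  rw [hsplit, lintegral_union measurableSet_Ioi
    (Set.disjoint_left.mpr (fun x hx1 hx2 => absurd hx1.2 (not_le.mpr hx2)))]
  have hzero : ∫⁻ x in Ioi (c/a), ENNReal.ofReal ((c - a*x)/b) = 0 := by
    have hz : ∀ x ∈ Ioi (c/a), ENNReal.ofReal ((c - a*x)/b) = 0 := by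
      intro x hx
      have hx' : c/a < x := hx
      have hcc : c - a*x < 0 := by
        have := (div_lt_iff₀ ha).mp hx'
        nlinarith
      exact ENNReal.ofReal_eq_zero.mpr (div_neg_of_neg_of_pos hcc hb).le
    rw [setLIntegral_congr_fun measurableSet_Ioi hz,
      lintegral_zero]
  rw [hzero, add_zero]
  have hint : IntegrableOn (fun x => (c - a*x)/b) (Icc 0 (c/a)) volume := by
    apply Continuous.integrableOn_Icc
    fun_prop
  have hnn : 0 ≤ᵐ[volume.restrict (Icc 0 (c/a))] fun x => (c - a*x)/b := by
    refine (ae_restrict_iff' measurableSet_Icc).mpr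
      (Filter.Eventually.of_forall (fun x hx => ?_))
    have hx2 : x * a ≤ c := (le_div_iff₀ ha).mp hx.2
    have hax : a * x ≤ c := by linarith [mul_comm a x, hx2]
    exact div_nonneg (by linarith) hb.le
  rw [← ofReal_integral_eq_lintegral_ofReal hint hnn]
  congr 1
  rw [MeasureTheory.integral_Icc_eq_integral_Ioc,
    ← intervalIntegral.integral_of_le (div_nonneg hc ha.le)]
  rw [intervalIntegral.integral_div]
  rw [intervalIntegral.integral_sub intervalIntegrable_const
    ((intervalIntegral.intervalIntegrable_id).const_mul a)]
  rw [intervalIntegral.integral_const, intervalIntegral.integral_const_mul,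
    integral_id]
  field_simp
  rw [smul_eq_mul, mul_zero, sub_zero, ← mul_assoc, show a * (c / a) = c from by rw [mul_comm]; exact div_mul_cancel₀ c ha.ne']
  ring

set_option maxHeartbeats 1000000 in
/-- The geometric inequality behind Corollary 6.11: for the Newton diagram Δ of a
finite set E ⊆ ℕ² meeting both coordinate axes (finite codimension), the area
m(Δ) of the region delimited by the two axes and the boundary of Δ satisfies
m(Δ) ≥ 2t², where t is the ordinate of the intersection of the line α = β with
the boundary of Δ; equality holds iff the Newton polygon consists of a single
face with equation α + β = N (i.e. Δ = {(α,β) : α,β ≥ 0, α + β ≥ N}), and then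
t = N/2. -/
theorem stmt_14 (E : Set (ℕ × ℕ)) (hfin : E.Finite) (hne : E.Nonempty)
    (hx : ∃ e ∈ E, e.1 = 0) (hy : ∃ e ∈ E, e.2 = 0) :
    let Δ := newtonDiagram E
    let m : ℝ := (volume ({r : ℝ × ℝ | 0 ≤ r.1 ∧ 0 ≤ r.2} \ Δ)).toReal
    let t : ℝ := sInf {s : ℝ | ((s, s) : ℝ × ℝ) ∈ Δ}
    2 * t ^ 2 ≤ m ∧
      (m = 2 * t ^ 2 ↔
        ∃ N : ℕ, Δ = {x : ℝ × ℝ | 0 ≤ x.1 ∧ 0 ≤ x.2 ∧ (N : ℝ) ≤ x.1 + x.2} ∧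
          t = N / 2) := by
  classical
  intro Δ m t
  set C : Set (ℝ × ℝ) := {r : ℝ × ℝ | 0 ≤ r.1 ∧ 0 ≤ r.2} with hCdef
  set S : Set (ℝ × ℝ) := (fun e : ℕ × ℕ => ((e.1 : ℝ), (e.2 : ℝ))) '' E with hSdef
  have hΔdef : Δ = convexHull ℝ (S + C) := rfl
  have hCconv : Convex ℝ C := by
    intro p hp q hq u v hu hv huv
    constructor
    · have : 0 ≤ u * p.1 + v * q.1 := by
        have := hp.1; have := hq.1; positivity
      simpa using this
    · have : 0 ≤ u * p.2 + v * q.2 := by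
        have := hp.2; have := hq.2; positivity
      simpa using this
  have hCclosed : IsClosed C := by
    have : C = (Ici (0:ℝ) ×ˢ Ici (0:ℝ)) := by
      ext p; exact Iff.rfl
    rw [this]
    exact isClosed_Ici.prod isClosed_Ici
  have hCadd : ∀ u ∈ C, ∀ v ∈ C, u + v ∈ C := by
    rintro u ⟨hu1, hu2⟩ v ⟨hv1, hv2⟩
    exact ⟨by simpa using add_nonneg hu1 hv1, by simpa using add_nonneg hu2 hv2⟩
  have hSfin : S.Finite := hfin.image _
  have hSC : S ⊆ C := by
    rintro p ⟨e, _, rfl⟩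
    exact ⟨by simp, by simp⟩
  have hΔ1 : Δ = convexHull ℝ S + C := by
    rw [hΔdef, convexHull_add, hCconv.convexHull_eq]
  have hhullC : convexHull ℝ S ⊆ C := convexHull_min hSC hCconv
  have hΔC : Δ ⊆ C := by
    rw [hΔ1]
    rintro p ⟨u, hu, v, hv, rfl⟩
    exact hCadd u (hhullC hu) v hv
  have hΔconv : Convex ℝ Δ := by rw [hΔdef]; exact convex_convexHull ℝ _
  have hΔclosed : IsClosed Δ := by
    rw [hΔ1]
    exact IsClosed.add_left_of_isCompact hCclosed (hSfin.isCompact_convexHull (𝕜 := ℝ))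
  have hup : ∀ p ∈ Δ, ∀ v ∈ C, p + v ∈ Δ := by
    rw [hΔ1]
    rintro p ⟨u, hu, w, hw, rfl⟩ v hv
    exact ⟨u, hu, w + v, hCadd w hw v hv, (add_assoc u w v).symm⟩
  have hSΔ : S ⊆ Δ := by
    intro s hs
    rw [hΔdef]
    apply subset_convexHull
    exact ⟨s, hs, 0, ⟨le_rfl, le_rfl⟩, add_zero s⟩
  -- axis points
  obtain ⟨ey, heyE, hey2⟩ := hy
  obtain ⟨ex, hexE, hex1⟩ := hx
  set k : ℕ := ey.1 with hkdef
  set l : ℕ := ex.2 with hldef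
  have hkS : ((k : ℝ), (0:ℝ)) ∈ S := by
    refine ⟨ey, heyE, ?_⟩
    show ((ey.1 : ℝ), (ey.2 : ℝ)) = ((k : ℝ), (0:ℝ))
    rw [hey2, hkdef]; simp
  have hlS : ((0:ℝ), (l : ℝ)) ∈ S := by
    refine ⟨ex, hexE, ?_⟩
    show ((ex.1 : ℝ), (ex.2 : ℝ)) = ((0:ℝ), (l : ℝ))
    rw [hex1, hldef]; simp
  have hkΔ : ((k : ℝ), (0:ℝ)) ∈ Δ := hSΔ hkS
  have hlΔ : ((0:ℝ), (l : ℝ)) ∈ Δ := hSΔ hlS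
  -- the set T of diagonal parameters
  set T : Set ℝ := {s : ℝ | ((s, s) : ℝ × ℝ) ∈ Δ} with hTdef
  have hTne : T.Nonempty := by
    refine ⟨max k l, ?_⟩
    have : ((max (k:ℝ) l, max (k:ℝ) l) : ℝ × ℝ)
        = ((k : ℝ), (0:ℝ)) + (max (k:ℝ) l - k, max (k:ℝ) l) := by
      simp
    show ((max (k:ℝ) l, max (k:ℝ) l) : ℝ × ℝ) ∈ Δ
    rw [this]
    exact hup _ hkΔ _ ⟨by simp [sub_nonneg, le_max_left], by
      have : (0:ℝ) ≤ k := Nat.cast_nonneg k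
      simp only []
      exact le_trans this (le_max_left _ _)⟩
  have hTbdd : BddBelow T := ⟨0, fun s hs => (hΔC hs).1⟩
  have hTclosed : IsClosed T :=
    hΔclosed.preimage (Continuous.prodMk continuous_id continuous_id)
  have htT : (t, t) ∈ Δ := hTclosed.csInf_mem hTne hTbdd
  have ht0 : 0 ≤ t := le_csInf hTne fun s hs => (hΔC hs).1
  have htle : ∀ s : ℝ, ((s,s) : ℝ × ℝ) ∈ Δ → t ≤ s := fun s hs => csInf_le hTbdd hs
  -- finiteness of the complement volume
  have hKbox : C \ Δ ⊆ Icc (0:ℝ) k ×ˢ Icc (0:ℝ) l := by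
    rintro p ⟨hpC, hpΔ⟩
    constructor
    · refine ⟨hpC.1, ?_⟩
      by_contra h
      push_neg at h
      exact hpΔ (by
        have : p = ((k:ℝ), (0:ℝ)) + (p.1 - k, p.2) := by simp
        rw [this]
        exact hup _ hkΔ _ ⟨by simp; linarith, by simp [hpC.2]⟩)
    · refine ⟨hpC.2, ?_⟩
      by_contra h
      push_neg at h
      exact hpΔ (by
        have : p = ((0:ℝ), (l:ℝ)) + (p.1, p.2 - l) := by simp
        rw [this]
        exact hup _ hlΔ _ ⟨by simp [hpC.1], by simp; linarith⟩)
  have hKfin : volume (C \ Δ) ≠ ⊤ := by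
    have h1 : volume (C \ Δ) ≤ volume (Icc (0:ℝ) k ×ˢ Icc (0:ℝ) l) :=
      measure_mono hKbox
    rw [Measure.volume_eq_prod ℝ ℝ, Measure.prod_prod] at h1
    simp only [Real.volume_Icc] at h1
    exact ne_top_of_le_ne_top (by finiteness) h1
  have hKmeas : MeasurableSet (C \ Δ) :=
    hCclosed.measurableSet.diff hΔclosed.measurableSet
  have hm_def : m = (volume (C \ Δ)).toReal := rfl
  clear_value Δ m t
  by_cases ht : t = 0
  · -- degenerate case : Δ = C
    have hΔeqC : Δ = C := by
      apply Subset.antisymm hΔC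
      intro v hv
      have : v = ((t, t) : ℝ × ℝ) + v := by rw [ht]; simp
      rw [this]
      exact hup _ htT _ hv
    have hm0 : m = 0 := by
      rw [hm_def, hΔeqC, diff_self]
      simp
    constructor
    · rw [hm0, ht]; norm_num
    · rw [hm0, ht]
      norm_num
      refine ⟨0, ?_, by norm_num⟩
      rw [hΔeqC]
      ext p
      simp only [hCdef, mem_setOf_eq, Nat.cast_zero]
      constructor
      · rintro ⟨h1, h2⟩; exact ⟨h1, h2, by linarith⟩
      · rintro ⟨h1, h2, _⟩; exact ⟨h1, h2⟩
  · have htpos : 0 < t := lt_of_le_of_ne ht0 (Ne.symm ht)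
    -- interior point
    have hq : (((k:ℝ) + 1, (1:ℝ)) : ℝ × ℝ) ∈ interior Δ := by
      rw [mem_interior]
      refine ⟨Ioi (k:ℝ) ×ˢ Ioi (0:ℝ), ?_, (isOpen_Ioi.prod isOpen_Ioi), ?_⟩
      · rintro p ⟨hp1, hp2⟩
        have : p = ((k:ℝ), (0:ℝ)) + (p.1 - k, p.2) := by simp
        rw [this]
        refine hup _ hkΔ _ ⟨?_, ?_⟩
        · simp only [mem_Ioi] at hp1
          simp; linarith
        · simp only [mem_Ioi] at hp2
          simp; linarith
      · constructor
        · simp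
        · simp
    -- (t,t) not in the interior
    have htt_not : ((t, t) : ℝ × ℝ) ∉ interior Δ := by
      intro h
      rw [mem_interior_iff_mem_nhds, Metric.mem_nhds_iff] at h
      obtain ⟨ε, hε, hball⟩ := h
      have hmem : ((t - ε/2, t - ε/2) : ℝ × ℝ) ∈ Δ := by
        apply hball
        rw [Metric.mem_ball]
        rw [Prod.dist_eq]
        simp only [Real.dist_eq]
        rw [show t - ε/2 - t = -(ε/2) by ring]
        rw [abs_neg, abs_of_nonneg (by linarith)]
        simp
        linarith
      have := htle _ hmem
      linarith
    obtain ⟨f, hf⟩ := geometric_hahn_banach_open_point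
      (hΔconv.interior) isOpen_interior htt_not
    -- f p ≤ f (t,t) for all p in Δ
    have hfΔ : ∀ p ∈ Δ, f p ≤ f (t, t) := by
      intro p hp
      have hseg : ∀ u : ℝ, u ∈ Ioc (0:ℝ) 1 →
          (1 - u) * f p + u * f ((k:ℝ)+1, 1) < f (t, t) := by
        intro u hu
        have hmem := hΔconv.combo_self_interior_mem_interior hp hq
          (by linarith [hu.2] : (0:ℝ) ≤ 1 - u) hu.1 (by ring)
        have h2 := hf _ hmem
        rw [map_add, f.map_smul, f.map_smul, smul_eq_mul, smul_eq_mul] at h2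
        exact h2
      have htend : Filter.Tendsto (fun u : ℝ => (1 - u) * f p + u * f ((k:ℝ)+1, 1))
          (nhdsWithin 0 (Ioi 0)) (nhds (f p)) := by
        have hcont : Continuous (fun u : ℝ => (1 - u) * f p + u * f ((k:ℝ)+1, 1)) :=
          (((continuous_const.sub continuous_id).mul continuous_const).add
            (continuous_id.mul continuous_const))
        have h3 := hcont.tendsto 0
        norm_num at h3
        exact h3.mono_left nhdsWithin_le_nhds
      refine le_of_tendsto htend ?_
      filter_upwards [Ioc_mem_nhdsGT_of_mem (⟨le_rfl, zero_lt_one⟩ : (0:ℝ) ∈ Ico (0:ℝ) 1)]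
        with u hu
      exact (hseg u hu).le
    -- coefficients
    set a : ℝ := -(f (1, 0)) with hadef
    set b : ℝ := -(f (0, 1)) with hbdef
    clear_value a b
    have hrep : ∀ p : ℝ × ℝ, f p = -(a * p.1 + b * p.2) := by
      intro p
      have hpe : p = p.1 • ((1:ℝ), (0:ℝ)) + p.2 • ((0:ℝ), (1:ℝ)) := by
        apply Prod.ext <;> simp
      rw [hadef, hbdef]
      calc f p = f (p.1 • ((1:ℝ), (0:ℝ)) + p.2 • ((0:ℝ), (1:ℝ))) := by rw [← hpe]
        _ = p.1 * f (1, 0) + p.2 * f (0, 1) := by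
            rw [map_add, f.map_smul, f.map_smul, smul_eq_mul, smul_eq_mul]
        _ = -(-(f (1,0)) * p.1 + -(f (0,1)) * p.2) := by ring
    -- halfplane bound : a * p.1 + b * p.2 ≥ (a+b) * t on Δ
    have hhalf : ∀ p ∈ Δ, (a + b) * t ≤ a * p.1 + b * p.2 := by
      intro p hp
      have := hfΔ p hp
      rw [hrep p, hrep (t, t)] at this
      simp only [] at this
      nlinarith [this]
    have ha0 : 0 ≤ a := by
      have hmem : ((t, t) : ℝ × ℝ) + ((1:ℝ), (0:ℝ)) ∈ Δ :=
        hup _ htT _ ⟨by norm_num, by norm_num⟩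
      have := hhalf _ hmem
      simp only [Prod.fst_add, Prod.snd_add] at this
      nlinarith [this]
    have hb0 : 0 ≤ b := by
      have hmem : ((t, t) : ℝ × ℝ) + ((0:ℝ), (1:ℝ)) ∈ Δ :=
        hup _ htT _ ⟨by norm_num, by norm_num⟩
      have := hhalf _ hmem
      simp only [Prod.fst_add, Prod.snd_add] at this
      nlinarith [this]
    have hab_pos : 0 < a + b := by
      rcases lt_or_eq_of_le (add_nonneg ha0 hb0) with h | h
      · exact h
      · exfalso
        have ha' : a = 0 := by linarith
        have hb' : b = 0 := by linarith
        have hlt := hf _ hq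
        rw [hrep ((k:ℝ)+1, 1), hrep (t, t), ha', hb'] at hlt
        simp at hlt
    have hapos : 0 < a := by
      have := hhalf _ hkΔ
      simp only [] at this
      by_contra h
      push_neg at h
      have hk0 : (0:ℝ) ≤ k := Nat.cast_nonneg k
      nlinarith [this]
    have hbpos : 0 < b := by
      have := hhalf _ hlΔ
      simp only [] at this
      by_contra h
      push_neg at h
      have hl0 : (0:ℝ) ≤ l := Nat.cast_nonneg l
      nlinarith [this]
    -- the main triangle
    set Tri : Set (ℝ × ℝ) :=
      {p : ℝ × ℝ | 0 ≤ p.1 ∧ 0 ≤ p.2 ∧ a*p.1 + b*p.2 < (a+b)*t} with hTridef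
    have hTriSub : Tri ⊆ C \ Δ := by
      rintro p ⟨h1, h2, h3⟩
      refine ⟨⟨h1, h2⟩, fun hpΔ => ?_⟩
      exact absurd (hhalf p hpΔ) (not_le.mpr h3)
    have hTriVol : volume Tri = ENNReal.ofReal (((a+b)*t)^2/(2*a*b)) :=
      triangle_volume a b ((a+b)*t) hapos hbpos (by positivity)
    have hmlow : ((a+b)*t)^2/(2*a*b) ≤ m := by
      have h1 : volume Tri ≤ volume (C \ Δ) := measure_mono hTriSub
      have h2 := ENNReal.toReal_mono hKfin h1
      rw [hTriVol, ENNReal.toReal_ofReal (by positivity)] at h2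
      rw [hm_def]
      exact h2
    have hineq : 2 * t ^ 2 ≤ m := by
      have hstep : 2 * t ^ 2 ≤ ((a+b)*t)^2/(2*a*b) := by
        rw [le_div_iff₀ (by positivity)]
        nlinarith [sq_nonneg ((a - b) * t)]
      linarith
    refine ⟨hineq, ?_, ?_⟩
    · -- forward direction of the iff
      intro hmeq
      have hab_eq : a = b := by
        rw [hmeq] at hmlow
        have h4 := (div_le_iff₀ (by positivity : (0:ℝ) < 2*a*b)).mp hmlow
        have h5 : (a - b)^2 * t^2 ≤ 0 := by nlinarith
        have ht2 : 0 < t^2 := by positivity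
        have h6 : (a - b)^2 ≤ 0 := by nlinarith [sq_nonneg (a - b)]
        have h7 : (a - b)^2 = 0 := le_antisymm h6 (sq_nonneg _)
        have h8 : a - b = 0 := by
          exact pow_eq_zero_iff (n := 2) (by norm_num) |>.mp h7
        linarith
      have hhalf2 : ∀ p ∈ Δ, 2*t ≤ p.1 + p.2 := by
        intro p hp
        have h := hhalf p hp
        rw [← hab_eq] at h
        have h2 : a * (2*t) ≤ a * (p.1 + p.2) := by nlinarith
        exact le_of_mul_le_mul_left h2 hapos
      set Tri' : Set (ℝ × ℝ) :=
        {p : ℝ × ℝ | 0 ≤ p.1 ∧ 0 ≤ p.2 ∧ 1*p.1 + 1*p.2 < 2*t} with hTri'def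
      have hT'vol : volume Tri' = ENNReal.ofReal ((2*t)^2/(2*1*1)) :=
        triangle_volume 1 1 (2*t) one_pos one_pos (by linarith)
      have hT'sub : Tri' ⊆ C \ Δ := by
        rintro p ⟨h1, h2, h3⟩
        refine ⟨⟨h1, h2⟩, fun hpΔ => ?_⟩
        have := hhalf2 p hpΔ
        rw [one_mul, one_mul] at h3
        linarith
      have hvol_eq : volume (C \ Δ) = ENNReal.ofReal (2*t^2) := by
        have h7 := ENNReal.ofReal_toReal hKfin
        rw [← h7, ← hm_def, hmeq]
      have hdiffzero : volume ((C \ Δ) \ Tri') = 0 := by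
        rw [measure_diff hT'sub (tri_meas 1 1 (2*t)).nullMeasurableSet
          (by rw [hT'vol]; exact ENNReal.ofReal_ne_top)]
        rw [hvol_eq, hT'vol]
        rw [show (2*t)^2/(2*1*1) = 2*t^2 by ring]
        exact tsub_self _
      have hsup : ∀ p : ℝ × ℝ, 0 ≤ p.1 → 0 ≤ p.2 → 2*t < p.1 + p.2 → p ∈ Δ := by
        intro p h1 h2 h3
        by_contra hpΔ
        obtain ⟨ε, hε, hball⟩ := Metric.isOpen_iff.mp hΔclosed.isOpen_compl p hpΔ
        set δ : ℝ := ε/2 with hδdef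
        have hδpos : 0 < δ := by positivity
        set Q : Set (ℝ × ℝ) := Ioo p.1 (p.1 + δ) ×ˢ Ioo p.2 (p.2 + δ) with hQdef
        have hQsub : Q ⊆ (C \ Δ) \ Tri' := by
          rintro q ⟨⟨hq1a, hq1b⟩, ⟨hq2a, hq2b⟩⟩
          refine ⟨⟨⟨by linarith, by linarith⟩, ?_⟩, ?_⟩
          · apply hball
            rw [Metric.mem_ball, Prod.dist_eq]
            apply max_lt
            · rw [Real.dist_eq, abs_of_nonneg (by linarith)]
              linarith
            · rw [Real.dist_eq, abs_of_nonneg (by linarith)]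
              linarith
          · rintro ⟨_, _, hlt⟩
            rw [one_mul, one_mul] at hlt
            linarith
        have hQvol : 0 < volume Q := by
          rw [hQdef, Measure.volume_eq_prod ℝ ℝ, Measure.prod_prod,
            Real.volume_Ioo, Real.volume_Ioo]
          rw [show p.1 + δ - p.1 = δ by ring, show p.2 + δ - p.2 = δ by ring]
          exact ENNReal.mul_pos (by simp [ENNReal.ofReal_pos, hδpos])
            (by simp [ENNReal.ofReal_pos, hδpos])
        have := measure_mono (μ := volume) hQsub
        rw [hdiffzero] at this
        exact absurd (le_antisymm this zero_le) (ne_of_gt hQvol)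
      have hΔeq2 : Δ = {p : ℝ × ℝ | 0 ≤ p.1 ∧ 0 ≤ p.2 ∧ 2*t ≤ p.1 + p.2} := by
        apply Subset.antisymm
        · intro p hp
          exact ⟨(hΔC hp).1, (hΔC hp).2, hhalf2 p hp⟩
        · rintro p ⟨h1, h2, h3⟩
          rcases eq_or_lt_of_le h3 with heq | hlt
          · have hcl : p ∈ closure Δ := by
              rw [Metric.mem_closure_iff]
              intro ε hε
              refine ⟨(p.1 + ε/2, p.2 + ε/2), hsup _ (by simp; linarith) (by simp; linarith)
                (by simp; linarith), ?_⟩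
              rw [Prod.dist_eq]
              apply max_lt
              · rw [Real.dist_eq, show p.1 - (p.1 + ε/2) = -(ε/2) by ring, abs_neg,
                  abs_of_nonneg (by linarith)]
                linarith
              · rw [Real.dist_eq, show p.2 - (p.2 + ε/2) = -(ε/2) by ring, abs_neg,
                  abs_of_nonneg (by linarith)]
                linarith
            rwa [hΔclosed.closure_eq] at hcl
          · exact hsup p h1 h2 hlt
      -- find the integer N
      obtain ⟨e₀, he₀, hmin⟩ := hfin.toFinset.exists_min_image
        (fun e : ℕ × ℕ => e.1 + e.2) (hfin.toFinset_nonempty.mpr hne)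
      rw [Set.Finite.mem_toFinset] at he₀
      set N : ℕ := e₀.1 + e₀.2 with hNdef
      have he₀Δ : ((e₀.1 : ℝ), (e₀.2 : ℝ)) ∈ Δ := hSΔ ⟨e₀, he₀, rfl⟩
      have hNge : 2*t ≤ (N : ℝ) := by
        have := (hΔeq2 ▸ he₀Δ : ((e₀.1:ℝ), (e₀.2:ℝ)) ∈
          {p : ℝ × ℝ | 0 ≤ p.1 ∧ 0 ≤ p.2 ∧ 2*t ≤ p.1 + p.2})
        have h8 := this.2.2
        push_cast [hNdef]
        simpa using h8
      have hNle : (N : ℝ) ≤ 2*t := by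
        have hhalfsub : Δ ⊆ {p : ℝ × ℝ | (N : ℝ) ≤ p.1 + p.2} := by
          rw [hΔdef]
          apply convexHull_min
          · rintro w ⟨s, ⟨e, heE, rfl⟩, v, hv, rfl⟩
            have hmin' := hmin e (Set.Finite.mem_toFinset hfin |>.mpr heE)
            have hc : (N : ℝ) ≤ (e.1 : ℝ) + (e.2 : ℝ) := by
              push_cast [hNdef]
              exact_mod_cast Nat.cast_le.mpr hmin'
            show (N : ℝ) ≤ ((e.1:ℝ), (e.2:ℝ)).1 + v.1 + (((e.1:ℝ), (e.2:ℝ)).2 + v.2)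
            have := hv.1; have := hv.2
            simp only [] at *
            linarith
          · intro p hp q hq u v hu hv huv
            simp only [mem_setOf_eq] at *
            have h1 : (u • p + v • q).1 = u * p.1 + v * q.1 := by
              simp [Prod.smul_def, smul_eq_mul]
            have h2 : (u • p + v • q).2 = u * p.2 + v * q.2 := by
              simp [Prod.smul_def, smul_eq_mul]
            rw [h1, h2]
            nlinarith [mul_le_mul_of_nonneg_left hp hu, mul_le_mul_of_nonneg_left hq hv]
        have h2t : ((2*t, 0) : ℝ × ℝ) ∈ Δ := by
          rw [hΔeq2]
          have hA : (0:ℝ) ≤ 2*t := by linarith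
          exact ⟨hA, le_rfl, by simp⟩
        have := hhalfsub h2t
        simpa using this
      have hN2t : (N : ℝ) = 2*t := le_antisymm hNle hNge
      refine ⟨N, ?_, by linarith⟩
      rw [hΔeq2, ← hN2t]
    · -- backward direction of the iff
      rintro ⟨N, hΔe, htN⟩
      have hCdiff : C \ Δ = {p : ℝ × ℝ | 0 ≤ p.1 ∧ 0 ≤ p.2 ∧ 1*p.1 + 1*p.2 < (N:ℝ)} := by
        ext p
        rw [hΔe]
        simp only [mem_diff, mem_setOf_eq, hCdef, one_mul]
        constructor
        · rintro ⟨⟨h1, h2⟩, hn⟩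
          exact ⟨h1, h2, not_le.mp (fun hNs => hn ⟨h1, h2, hNs⟩)⟩
        · rintro ⟨h1, h2, h3⟩
          exact ⟨⟨h1, h2⟩, fun hmem => absurd hmem.2.2 (not_le.mpr h3)⟩
      rw [hm_def, hCdiff, triangle_volume 1 1 (N:ℝ) one_pos one_pos (Nat.cast_nonneg N),
        ENNReal.toReal_ofReal (by positivity), htN]
      ring
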